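/- Let G be a finitely generated group with at least 2 ends, with fixed finite symmetric generating set S. Then there exists N_G ∈ ℕ such that for every n ≥ N_G there exists an n-axial element g ∈ G. -/

import Mathlib

open scoped Pointwise

/-- The Cayley graph of a group with respect to a (symmetric) set `S`:
`g` and `g'` are adjacent when they differ by right multiplication by an element of `S`. -/
def cayley {G : Type*} [Group G] (S : Set G) : SimpleGraph G :=
  SimpleGraph.fromRel (fun g g' => g⁻¹ * g' ∈ S)

/-- `x` and `y` are joined by a walk of `Γ` avoiding the vertex set `K`, i.e. they are in the
same connected component of the graph obtained from `Γ` by deleting the vertices of `K` and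
all incident edges. -/
def ReachAvoid {V : Type*} (Γ : SimpleGraph V) (K : Set V) (x y : V) : Prop :=
  ∃ w : Γ.Walk x y, ∀ v ∈ w.support, v ∉ K

/-- `Separates S B₁ B₀ B₂` : `B₁` separates `B₀` from `B₂`, i.e. `B₀` and `B₂` lie in distinct
connected components of the graph obtained from the Cayley graph of `(G,S)` by deleting the
vertices of `B₁` and all incident edges. -/
def Separates {G : Type*} [Group G] (S : Set G) (B₁ B₀ B₂ : Set G) : Prop :=
  Disjoint B₀ B₁ ∧ Disjoint B₂ B₁ ∧
    ∀ x ∈ B₀, ∀ y ∈ B₂, ¬ ReachAvoid (cayley S) B₁ x y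

/-- The closed ball of radius `n` about `g` in the word metric induced by `S`. -/
def ball {G : Type*} [Group G] (S : Set G) (n : ℕ) (g : G) : Set G :=
  {x : G | (cayley S).dist g x ≤ n}

/-- `G` has at least two ends (with respect to the generating set `S`): for some `n`,
deleting the ball of radius `n` about the identity from the Cayley graph leaves at least
two distinct unbounded (infinite) connected components. -/
def TwoEnds {G : Type*} [Group G] (S : Set G) : Prop :=
  ∃ n : ℕ, ∃ C₁ C₂ : ((cayley S).induce (ball S n 1)ᶜ).ConnectedComponent,
    C₁ ≠ C₂ ∧ C₁.supp.Infinite ∧ C₂.supp.Infinite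

/-- `g` is `n`-axial: for all integers `a < b < c`, the translate `g^b • B(n,1)` separates
`g^a • B(n,1)` from `g^c • B(n,1)`. -/
def IsAxial {G : Type*} [Group G] (S : Set G) (n : ℕ) (g : G) : Prop :=
  ∀ a b c : ℤ, a < b → b < c →
    Separates S (g ^ b • ball S n 1) (g ^ a • ball S n 1) (g ^ c • ball S n 1)

/-!
Fix `n ≥ n₀`, where `Cay ∖ B(n₀,1)` has two infinite components, and write `K = B(n,1)` and
`x ~ y` for `ReachAvoid (cayley S) K x y`. If `d(1,h) > 2n`, then deleting the ball `hK` leaves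
every vertex `w ≁ h` connected to `1`; translating by `h⁻¹`, such a `w` satisfies `h⁻¹w ~ h⁻¹`.

Were `g ~ g⁻¹` for every `g` with `d(1,g) > 2n`, then for far points `h`, `k` of the two infinite
components, with `d(h,k) > 2n`, the chain `h ~ h⁻¹ ~ h⁻¹k ~ k⁻¹h ~ k⁻¹ ~ k` would join them.
So some far `g` has `g ≁ g⁻¹`. The `~`-class `A` of such a `g` satisfies `g(A ∪ K) ⊆ A`, and by
ping-pong `gᵐK ⊆ A` while `g⁻ᵐK` misses `A ∪ K` for `m > 0`; hence `K` separates `gᵃK` from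
`gᶜK` whenever `a < 0 < c`, and translating by `gᵇ` shows that `g` is `n`-axial.
-/

namespace ReachAvoid

variable {V : Type*} {Γ : SimpleGraph V} {K L : Set V} {x y z : V}

theorem symm (h : ReachAvoid Γ K x y) : ReachAvoid Γ K y x := by
  obtain ⟨w, hw⟩ := h
  exact ⟨w.reverse, by simpa using hw⟩

theorem trans (h : ReachAvoid Γ K x y) (h' : ReachAvoid Γ K y z) : ReachAvoid Γ K x z := by
  obtain ⟨w, hw⟩ := h
  obtain ⟨w', hw'⟩ := h'
  refine ⟨w.append w', fun v hv => ?_⟩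
  rcases w.mem_support_append_iff w' |>.mp hv with hv | hv
  exacts [hw v hv, hw' v hv]

theorem notMem_left (h : ReachAvoid Γ K x y) : x ∉ K :=
  h.elim fun w hw => hw x w.start_mem_support

theorem mono (hLK : L ⊆ K) (h : ReachAvoid Γ K x y) : ReachAvoid Γ L x y :=
  h.elim fun w hw => ⟨w, fun v hv hvL => hw v hv (hLK hvL)⟩

theorem of_adj (hxy : Γ.Adj x y) (hx : x ∉ K) (hy : y ∉ K) : ReachAvoid Γ K x y :=
  ⟨.cons hxy .nil, by simp [hx, hy]⟩

theorem of_mem_support (w : Γ.Walk x y) (hw : ∀ v ∈ w.support, v ∉ K) {v : V}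
    (hv : v ∈ w.support) : ReachAvoid Γ K x v := by
  classical
  exact ⟨w.takeUntil v hv, fun u hu => hw u (w.support_takeUntil_subset_support hv hu)⟩

theorem of_forall_notMem (hL : ∀ v, ReachAvoid Γ K x v → v ∉ L) (h : ReachAvoid Γ K x y) :
    ReachAvoid Γ L x y :=
  h.elim fun w hw => ⟨w, fun _ hv => hL _ (of_mem_support w hw hv)⟩

end ReachAvoid

namespace SimpleGraph

variable {V : Type*} {Γ : SimpleGraph V} {K : Set V}

theorem reachAvoid_iff_reachable_induce {x y : ↥Kᶜ} :
    ReachAvoid Γ K x y ↔ (Γ.induce Kᶜ).Reachable x y := by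
  constructor
  · rintro ⟨w, hw⟩
    exact ⟨w.induce Kᶜ hw⟩
  · rintro ⟨w⟩
    refine ⟨w.map (Embedding.induce Kᶜ).toHom, fun v hv => ?_⟩
    obtain ⟨u, -, rfl⟩ := List.mem_map.mp (Walk.support_map _ w ▸ hv)
    exact u.2

theorem not_reachAvoid_of_mem_supp {C₁ C₂ : (Γ.induce Kᶜ).ConnectedComponent} (hne : C₁ ≠ C₂)
    {x y : ↥Kᶜ} (hx : x ∈ C₁.supp) (hy : y ∈ C₂.supp) : ¬ ReachAvoid Γ K x y := fun hxy =>
  hne (hx ▸ hy ▸ ConnectedComponent.sound (reachAvoid_iff_reachable_induce.mp hxy))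

theorem Preconnected.exists_reachAvoid_adj_mem (hΓ : Γ.Preconnected) (hK : K.Nonempty)
    {x : V} (hx : x ∉ K) : ∃ v z, ReachAvoid Γ K x v ∧ Γ.Adj v z ∧ z ∈ K := by
  obtain ⟨⟨v, z⟩, ⟨hv, hvx⟩, hz, hvz⟩ :=
    ComponentCompl.exists_adj_boundary_pair hΓ hK (Γ.componentComplMk hx)
  refine ⟨v, z, ?_, hvz, hz⟩
  exact (reachAvoid_iff_reachable_induce (x := ⟨v, hv⟩) (y := ⟨x, hx⟩)).mpr
    (ConnectedComponent.exact hvx) |>.symm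

theorem Iso.dist_eq {W : Type*} {Γ' : SimpleGraph W} (φ : Γ ≃g Γ') (u v : V) :
    Γ'.dist (φ u) (φ v) = Γ.dist u v := by
  by_cases huv : Γ.Reachable u v
  · obtain ⟨p, hp⟩ := huv.exists_walk_length_eq_dist
    obtain ⟨q, hq⟩ := (φ.reachable_iff.mpr huv).exists_walk_length_eq_dist
    refine le_antisymm ?_ ?_
    · simpa [hp] using dist_le (p.map φ.toHom)
    · simpa [hq] using dist_le (q.map φ.symm.toHom)
  · rw [dist_eq_zero_of_not_reachable huv,
      dist_eq_zero_of_not_reachable (mt φ.reachable_iff.mp huv)]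

end SimpleGraph

section Cayley

variable {G : Type*} [Group G] {S : Set G}

theorem cayley_adj {x y : G} : (cayley S).Adj x y ↔ x ≠ y ∧ (x⁻¹ * y ∈ S ∨ y⁻¹ * x ∈ S) :=
  SimpleGraph.fromRel_adj _ _ _

theorem inv_mul_mem_of_cayley_adj {x y : G} (h : (cayley S).Adj x y) : x⁻¹ * y ∈ S ∪ S⁻¹ := by
  rcases (cayley_adj.mp h).2 with h | h
  · exact .inl h
  · exact .inr (by simpa using h)

variable (S) in
def cayleyMulLeft (h : G) : cayley S ≃g cayley S where
  toEquiv := Equiv.mulLeft h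
  map_rel_iff' := by simp [cayley_adj, mul_assoc]

@[simp]
theorem cayleyMulLeft_apply (h x : G) : cayleyMulLeft S h x = h * x := rfl

theorem cayley_dist_mul_left (h x y : G) :
    (cayley S).dist (h * x) (h * y) = (cayley S).dist x y :=
  (cayleyMulLeft S h).dist_eq x y

theorem ReachAvoid.mul_left {K : Set G} {x y : G} (h : G) (hr : ReachAvoid (cayley S) K x y) :
    ReachAvoid (cayley S) (h • K) (h * x) (h * y) := by
  obtain ⟨w, hw⟩ := hr
  refine ⟨w.map (cayleyMulLeft S h).toHom, fun v hv hvK => ?_⟩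
  obtain ⟨u, hu, rfl⟩ := List.mem_map.mp (SimpleGraph.Walk.support_map _ w ▸ hv)
  exact hw u hu (Set.smul_mem_smul_set_iff.mp hvK)

theorem reachAvoid_mul_left_iff {K : Set G} {x y : G} (h : G) :
    ReachAvoid (cayley S) (h • K) (h * x) (h * y) ↔ ReachAvoid (cayley S) K x y :=
  ⟨fun hr => by simpa [smul_smul] using hr.mul_left h⁻¹, .mul_left h⟩

theorem cayley_connected (hgen : Subgroup.closure S = ⊤) : (cayley S).Connected := by
  have hreach (g : G) : (cayley S).Reachable 1 g := by
    induction (hgen ▸ Subgroup.mem_top g : g ∈ Subgroup.closure S)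
      using Subgroup.closure_induction with
    | mem s hs =>
      by_cases h1 : s = 1
      · exact h1 ▸ .rfl
      · exact (cayley_adj.mpr ⟨Ne.symm h1, .inl (by simpa using hs)⟩).reachable
    | one => exact .rfl
    | mul x y _ _ hx hy => exact hx.trans (by simpa using (cayleyMulLeft S x).reachable_iff.mpr hy)
    | inv x _ hx => simpa using ((cayleyMulLeft S x⁻¹).reachable_iff.mpr hx).symm
  exact (SimpleGraph.connected_iff _).mpr ⟨fun x y => (hreach x).symm.trans (hreach y), ⟨1⟩⟩

end Cayley

section Ball

variable {G : Type*} [Group G] {S : Set G}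

theorem mem_ball_self (n : ℕ) (c : G) : c ∈ ball S n c := by
  simp [ball]

theorem ball_mono {m n : ℕ} (h : m ≤ n) (c : G) : ball S m c ⊆ ball S n c :=
  fun _ hx => le_trans hx h

theorem smul_ball_one_eq_ball (g : G) (n : ℕ) : g • ball S n 1 = ball S n g := by
  ext x
  rw [Set.mem_smul_set_iff_inv_smul_mem]
  simp [ball, ← cayley_dist_mul_left (S := S) g 1 (g⁻¹ * x)]

theorem disjoint_ball_of_lt_dist (hgen : Subgroup.closure S = ⊤) {n : ℕ} {c d : G}
    (h : 2 * n < (cayley S).dist c d) : Disjoint (ball S n c) (ball S n d) := by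
  refine Set.disjoint_left.mpr fun x hc hd => ?_
  have := (cayley_connected hgen).dist_triangle (u := c) (v := x) (w := d)
  simp only [ball, Set.mem_ofPred_eq, SimpleGraph.dist_comm (u := d)] at hc hd
  omega

theorem reachAvoid_center_of_mem_ball (hgen : Subgroup.closure S = ⊤) {L : Set G} {n : ℕ}
    {c x : G} (hL : Disjoint (ball S n c) L) (hx : x ∈ ball S n c) :
    ReachAvoid (cayley S) L x c := by
  classical
  obtain ⟨p, hp⟩ := (cayley_connected hgen).exists_walk_length_eq_dist c x
  refine ReachAvoid.symm ⟨p, fun v hv => Set.disjoint_left.mp hL ?_⟩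
  calc (cayley S).dist c v ≤ (p.takeUntil v hv).length := SimpleGraph.dist_le _
    _ ≤ p.length := p.length_takeUntil_le_length hv
    _ ≤ n := hp ▸ hx

theorem inv_mul_mem_pow_length {a x : G} (w : (cayley S).Walk a x) :
    a⁻¹ * x ∈ (S ∪ S⁻¹) ^ w.length := by
  induction w with
  | nil => simp
  | @cons a m x ham _ ih =>
    rw [SimpleGraph.Walk.length_cons, pow_succ', show a⁻¹ * x = a⁻¹ * m * (m⁻¹ * x) by group]
    exact Set.mul_mem_mul (inv_mul_mem_of_cayley_adj ham) ih

theorem ball_one_finite (hS : S.Finite) (hgen : Subgroup.closure S = ⊤) (n : ℕ) :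
    (ball S n (1 : G)).Finite := by
  classical
  set T := insert 1 (S ∪ S⁻¹)
  have hT : T.Finite := (hS.union hS.inv).insert 1
  refine (show (T ^ n).Finite by simpa using (hT.toFinset ^ n).finite_toSet).subset ?_
  intro x hx
  obtain ⟨p, hp⟩ := (cayley_connected hgen).exists_walk_length_eq_dist 1 x
  have hpx : x ∈ (S ∪ S⁻¹) ^ p.length := by simpa using inv_mul_mem_pow_length p
  exact Set.pow_subset_pow_right (Set.mem_insert 1 _) (hp ▸ hx)
    (Set.pow_subset_pow_left (Set.subset_insert 1 _) hpx)

theorem exists_mem_lt_dist_one (hS : S.Finite) (hgen : Subgroup.closure S = ⊤) {D : Set G}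
    (hD : D.Infinite) (R : ℕ) : ∃ x ∈ D, R < (cayley S).dist 1 x := by
  obtain ⟨x, hxD, hx⟩ := hD.exists_notMem_finite (ball_one_finite hS hgen R)
  exact ⟨x, hxD, not_le.mp hx⟩

theorem exists_far_pair (hS : S.Finite) (hgen : Subgroup.closure S = ⊤) {D₁ D₂ : Set G}
    (hD₁ : D₁.Infinite) (hD₂ : D₂.Infinite) (R : ℕ) :
    ∃ x ∈ D₁, ∃ y ∈ D₂, R < (cayley S).dist 1 x ∧ R < (cayley S).dist 1 y ∧
      R < (cayley S).dist x y := by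
  obtain ⟨x, hx, hxR⟩ := exists_mem_lt_dist_one hS hgen hD₁ R
  obtain ⟨y, hy, hyR⟩ := exists_mem_lt_dist_one hS hgen hD₂ ((cayley S).dist 1 x + R)
  have := (cayley_connected hgen).dist_triangle (u := 1) (v := x) (w := y)
  exact ⟨x, hx, y, hy, hxR, by omega, by omega⟩

end Ball

section Axial

variable {G : Type*} [Group G] {S : Set G} {n : ℕ}

theorem Separates.smul {B₁ B₀ B₂ : Set G} (h : G) (hsep : Separates S B₁ B₀ B₂) :
    Separates S (h • B₁) (h • B₀) (h • B₂) := by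
  obtain ⟨h₀, h₂, hsep⟩ := hsep
  refine ⟨Set.disjoint_smul_set.mpr h₀, Set.disjoint_smul_set.mpr h₂, ?_⟩
  rintro _ ⟨x, hx, rfl⟩ _ ⟨y, hy, rfl⟩ hxy
  exact hsep x hx y hy ((reachAvoid_mul_left_iff h).mp hxy)

theorem isAxial_of_smul_subset {g : G} {A : Set G}
    (hA : ∀ ⦃x y⦄, ReachAvoid (cayley S) (ball S n 1) x y → y ∈ A → x ∈ A)
    (hAK : Disjoint A (ball S n 1)) (hg : g • (A ∪ ball S n 1) ⊆ A) : IsAxial S n g := by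
  set K := ball S n (1 : G)
  have hpow : ∀ m : ℤ, 1 ≤ m → g ^ m • (A ∪ K) ⊆ A := by
    refine Int.leInduction (by simpa using hg) fun m _ ih => ?_
    rw [add_comm, zpow_add, zpow_one, mul_smul]
    exact (Set.smul_set_mono (ih.trans Set.subset_union_left)).trans hg
  have hpos (m : ℤ) (hm : 0 < m) : g ^ m • K ⊆ A :=
    (Set.smul_set_mono Set.subset_union_right).trans (hpow m hm)
  have hneg (m : ℤ) (hm : 0 < m) (x : G) (hx : x ∈ g ^ (-m) • K) : x ∉ A ∪ K := by
    intro hxAK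
    obtain ⟨k, hk, rfl⟩ := hx
    have hgk : g ^ m • g ^ (-m) • k ∈ g ^ m • (A ∪ K) := Set.smul_mem_smul_set hxAK
    rw [smul_smul, ← zpow_add, add_neg_cancel, zpow_zero, one_smul] at hgk
    exact hAK.notMem_of_mem_left (hpow m hm hgk) hk
  have hbase (a c : ℤ) (ha : a < 0) (hc : 0 < c) : Separates S K (g ^ a • K) (g ^ c • K) := by
    have hx (x : G) (hx : x ∈ g ^ a • K) : x ∉ A ∪ K := hneg (-a) (by omega) x (by simpa using hx)
    refine ⟨Set.disjoint_left.mpr fun x hxa hxK => hx x hxa (.inr hxK),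
      hAK.mono_left (hpos c hc), fun x hxa y hyc hxy => hx x hxa (.inl (hA hxy (hpos c hc hyc)))⟩
  intro a b c hab hbc
  simpa [smul_smul, ← zpow_add] using (hbase (a - b) (c - b) (by omega) (by omega)).smul (g ^ b)

end Axial

section FarElements

variable {G : Type*} [Group G] {S : Set G} {n : ℕ}

/-- A path from `w` to `B(n,1)`, stopped when it first enters the ball, stays in the class of `w`,
which misses `B(n,h)` since that ball lies in the class of `h`. -/
theorem reachAvoid_one_of_not_reachAvoid (hgen : Subgroup.closure S = ⊤) {h w : G}
    (hfar : 2 * n < (cayley S).dist 1 h)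
    (hwh : ¬ ReachAvoid (cayley S) (ball S n 1) w h) : ReachAvoid (cayley S) (ball S n h) w 1 := by
  have hdisj : Disjoint (ball S n 1) (ball S n h) := disjoint_ball_of_lt_dist hgen hfar
  have hK (z : G) (hz : z ∈ ball S n 1) : ReachAvoid (cayley S) (ball S n h) z 1 :=
    reachAvoid_center_of_mem_ball hgen hdisj hz
  by_cases hwK : w ∈ ball S n 1
  · exact hK w hwK
  obtain ⟨v, z, hwv, hvz, hz⟩ := (cayley_connected hgen).preconnected.exists_reachAvoid_adj_mem
    ⟨1, mem_ball_self n 1⟩ hwK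
  have hclass (u : G) (hwu : ReachAvoid (cayley S) (ball S n 1) w u) : u ∉ ball S n h :=
    fun hu => hwh (hwu.trans (reachAvoid_center_of_mem_ball hgen hdisj.symm hu))
  exact ((hwv.of_forall_notMem hclass).trans
    (.of_adj hvz (hclass v hwv) (hdisj.notMem_of_mem_left hz))).trans (hK z hz)

theorem reachAvoid_inv_mul_of_not_reachAvoid (hgen : Subgroup.closure S = ⊤) {h w : G}
    (hfar : 2 * n < (cayley S).dist 1 h)
    (hwh : ¬ ReachAvoid (cayley S) (ball S n 1) w h) :
    ReachAvoid (cayley S) (ball S n 1) (h⁻¹ * w) h⁻¹ := by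
  have := reachAvoid_one_of_not_reachAvoid hgen hfar hwh
  rw [← smul_ball_one_eq_ball] at this
  simpa [smul_smul] using this.mul_left h⁻¹

theorem smul_subset_of_not_reachAvoid_inv (hgen : Subgroup.closure S = ⊤) {g : G}
    (hfar : 2 * n < (cayley S).dist 1 g) (hg : ¬ ReachAvoid (cayley S) (ball S n 1) g g⁻¹) :
    g • ({u | ReachAvoid (cayley S) (ball S n 1) u g} ∪ ball S n 1) ⊆
      {u | ReachAvoid (cayley S) (ball S n 1) u g} := by
  rintro _ ⟨v, hv | hv, rfl⟩
  · by_contra hgv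
    have := reachAvoid_inv_mul_of_not_reachAvoid hgen hfar hgv
    exact hg (hv.symm.trans (by simpa using this))
  · refine reachAvoid_center_of_mem_ball hgen (disjoint_ball_of_lt_dist hgen hfar).symm ?_
    rw [← smul_ball_one_eq_ball]
    exact Set.smul_mem_smul_set hv

theorem isAxial_of_not_reachAvoid_inv (hgen : Subgroup.closure S = ⊤) {g : G}
    (hfar : 2 * n < (cayley S).dist 1 g) (hg : ¬ ReachAvoid (cayley S) (ball S n 1) g g⁻¹) :
    IsAxial S n g :=
  isAxial_of_smul_subset (fun _ _ hxy hy => hxy.trans hy)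
    (Set.disjoint_left.mpr fun _ hu => ReachAvoid.notMem_left hu)
    (smul_subset_of_not_reachAvoid_inv hgen hfar hg)

theorem exists_not_reachAvoid_inv (hgen : Subgroup.closure S = ⊤) {h k : G}
    (hh : 2 * n < (cayley S).dist 1 h) (hk : 2 * n < (cayley S).dist 1 k)
    (hhk : 2 * n < (cayley S).dist h k) (hsep : ¬ ReachAvoid (cayley S) (ball S n 1) h k) :
    ∃ g : G, 2 * n < (cayley S).dist 1 g ∧ ¬ ReachAvoid (cayley S) (ball S n 1) g g⁻¹ := by
  by_contra! hall
  have h₁ := reachAvoid_inv_mul_of_not_reachAvoid hgen hh (fun r => hsep r.symm)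
  have h₂ := reachAvoid_inv_mul_of_not_reachAvoid hgen hk hsep
  have hm : 2 * n < (cayley S).dist 1 (h⁻¹ * k) := by
    rwa [← cayley_dist_mul_left h, mul_one, mul_inv_cancel_left]
  have h₃ := hall (h⁻¹ * k) hm
  rw [mul_inv_rev, inv_inv] at h₃
  exact hsep ((hall h hh).trans (h₁.symm.trans (h₃.trans (h₂.trans (hall k hk).symm))))

end FarElements

theorem stmt7_general {G : Type*} [Group G] (S : Finset G)
    (hgen : Subgroup.closure (S : Set G) = ⊤)
    (h2 : TwoEnds (S : Set G)) :
    ∃ N : ℕ, ∀ n : ℕ, N ≤ n → ∃ g : G, IsAxial (S : Set G) n g := by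
  obtain ⟨n₀, C₁, C₂, hne, hC₁, hC₂⟩ := h2
  refine ⟨n₀, fun n hn => ?_⟩
  obtain ⟨_, ⟨x, hx, rfl⟩, _, ⟨y, hy, rfl⟩, hx1, hy1, hxy⟩ :=
    exists_far_pair S.finite_toSet hgen (hC₁.image Subtype.val_injective.injOn)
      (hC₂.image Subtype.val_injective.injOn) (2 * n)
  obtain ⟨g, hg, hgg⟩ := exists_not_reachAvoid_inv hgen hx1 hy1 hxy
    fun h => SimpleGraph.not_reachAvoid_of_mem_supp hne hx hy (h.mono (ball_mono hn 1))
  exact ⟨g, isAxial_of_not_reachAvoid_inv hgen hg hgg⟩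

/-- a finitely generated group with at least two ends has `n`-axial elements for
all sufficiently large `n`. -/
theorem stmt7 {G : Type*} [Group G] (S : Finset G)
    (hsym : ∀ s ∈ S, s⁻¹ ∈ S) (hgen : Subgroup.closure (S : Set G) = ⊤)
    (h2 : TwoEnds (S : Set G)) :
    ∃ N : ℕ, ∀ n : ℕ, N ≤ n → ∃ g : G, IsAxial (S : Set G) n g :=
  stmt7_general S hgen h2
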